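/- arXiv:math/0403144 — 3 statements merged into one kernel-verified Lean document; each statement's English description precedes it below -/
import Mathlib

section
/- Let ℓ ≥ 3 be odd, ζ a primitive ℓ-th root of unity in a characteristic-zero field k. Define λ_r = (ζ^{r+1} + ζ^{−(r+1)})/(ζ − ζ^{−1})² for 0 ≤ r ≤ ℓ−1. Then λ_r = λ_s if and only if r = s or r + s = ℓ − 2. -/
lemma stmt9_pow_inj {k : Type} [Field k] {ζ : k} {ℓ : ℕ} (hζ : IsPrimitiveRoot ζ ℓ)
    (hζ0 : ζ ≠ 0) {a b : ℕ} (hab : a ≤ b) (hlt : b - a < ℓ) (h : ζ ^ a = ζ ^ b) : a = b := by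
  have h1 : ζ ^ a * ζ ^ (b - a) = ζ ^ a * 1 := by
    rw [← pow_add, mul_one, show a + (b - a) = b by omega]
    exact h.symm
  have h2 : ζ ^ (b - a) = 1 := mul_left_cancel₀ (pow_ne_zero _ hζ0) h1
  have h3 : ℓ ∣ b - a := (hζ.pow_eq_one_iff_dvd _).mp h2
  have := Nat.eq_zero_of_dvd_of_lt h3 hlt
  omega

/-- For `ℓ ≥ 3` odd, `ζ` a primitive `ℓ`-th root of unity in a characteristic zero field, the
Casimir eigenvalues `λ_r = (ζ^{r+1} + ζ^{-(r+1)})/(ζ - ζ^{-1})²` (`0 ≤ r ≤ ℓ-1`) satisfy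
`λ_r = λ_s` iff `r = s` or `r + s = ℓ - 2`. -/
theorem stmt9 {k : Type} [Field k] [CharZero k] (ℓ : ℕ) (hodd : Odd ℓ) (h3 : 3 ≤ ℓ)
    (ζ : k) (hζ : IsPrimitiveRoot ζ ℓ) (r s : ℕ) (hr : r ≤ ℓ - 1) (hs : s ≤ ℓ - 1) :
    (ζ ^ (r + 1) + ζ⁻¹ ^ (r + 1)) / (ζ - ζ⁻¹) ^ 2 =
      (ζ ^ (s + 1) + ζ⁻¹ ^ (s + 1)) / (ζ - ζ⁻¹) ^ 2 ↔ (r = s ∨ r + s = ℓ - 2) := by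
  have hl0 : ℓ ≠ 0 := by omega
  have hζ0 : ζ ≠ 0 := hζ.ne_zero hl0
  have hden : ζ - ζ⁻¹ ≠ 0 := by
    intro h
    have h1 : ζ = ζ⁻¹ := sub_eq_zero.mp h
    have h2 : ζ ^ 2 = 1 := by
      rw [pow_two]
      nth_rewrite 2 [h1]
      field_simp
    have h4 : ℓ ∣ 2 := (hζ.pow_eq_one_iff_dvd _).mp h2
    have := Nat.le_of_dvd (by norm_num) h4
    omega
  have hdne : (ζ - ζ⁻¹) ^ 2 ≠ 0 := pow_ne_zero _ hden
  rw [div_left_inj' hdne]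
  have hpow : ζ ^ (r + s + 2) ≠ 0 := pow_ne_zero _ hζ0
  have hid : (ζ ^ (r + 1) - ζ ^ (s + 1)) * (ζ ^ (r + s + 2) - 1)
      = (ζ ^ (r + 1) + ζ⁻¹ ^ (r + 1) - (ζ ^ (s + 1) + ζ⁻¹ ^ (s + 1))) * ζ ^ (r + s + 2) := by
    simp only [inv_pow]
    field_simp
    ring
  have key : ζ ^ (r + 1) + ζ⁻¹ ^ (r + 1) = ζ ^ (s + 1) + ζ⁻¹ ^ (s + 1) ↔
      (ζ ^ (r + 1) = ζ ^ (s + 1) ∨ ζ ^ (r + s + 2) = 1) := by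
    constructor
    · intro h
      have h0 : (ζ ^ (r + 1) - ζ ^ (s + 1)) * (ζ ^ (r + s + 2) - 1) = 0 := by
        rw [hid, sub_eq_zero.mpr h, zero_mul]
      rcases mul_eq_zero.mp h0 with h1 | h1
      · exact Or.inl (sub_eq_zero.mp h1)
      · exact Or.inr (sub_eq_zero.mp h1)
    · intro h
      have h0 : (ζ ^ (r + 1) - ζ ^ (s + 1)) * (ζ ^ (r + s + 2) - 1) = 0 := by
        rcases h with h1 | h1
        · rw [sub_eq_zero.mpr h1, zero_mul]
        · rw [sub_eq_zero.mpr h1, mul_zero]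
      rw [hid] at h0
      rcases mul_eq_zero.mp h0 with h1 | h1
      · exact sub_eq_zero.mp h1
      · exact absurd h1 hpow
  rw [key]
  constructor
  · rintro (h | h)
    · rcases le_total r s with hle | hle
      · have := stmt9_pow_inj hζ hζ0 (by omega : r + 1 ≤ s + 1) (by omega) h
        omega
      · have := stmt9_pow_inj hζ hζ0 (by omega : s + 1 ≤ r + 1) (by omega) h.symm
        omega
    · obtain ⟨c, hc⟩ := (hζ.pow_eq_one_iff_dvd _).mp h
      have hc0 : c ≠ 0 := by rintro rfl; omega
      have hc2 : c ≤ 2 := by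
        by_contra hc'
        push_neg at hc'
        have : ℓ * 3 ≤ ℓ * c := Nat.mul_le_mul_left ℓ hc'
        omega
      rcases (by omega : c = 1 ∨ c = 2) with rfl | rfl
      · right; omega
      · left; omega
  · rintro (h | h)
    · left; rw [h]
    · right
      exact (hζ.pow_eq_one_iff_dvd _).mpr ⟨1, by omega⟩
end

section
/- Let M be a subcomodule of a coalgebra C (over a field k, C regarded as right comodule over itself). Then the coefficient space cf(M) equals the subcoalgebra C(M) of C generated by M; explicitly, cf(M) is the smallest subcoalgebra of C containing M. -/
open TensorProduct Coalgebra

/-- A subspace `D` of a coalgebra `C` is a subcoalgebra if `Δ(D) ⊆ D ⊗ D`. -/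
def IsSubcoalgebra {k C : Type} [CommRing k] [AddCommGroup C] [Module k C] [Coalgebra k C]
    (D : Submodule k C) : Prop :=
  ∀ x ∈ D, comul (R := k) x ∈ LinearMap.range (TensorProduct.map D.subtype D.subtype)

/-- The coefficient space of a subcomodule `M ⊆ C`: the span of all the right-hand tensor
components `∑ φ(m₁) m₂` of `Δ(m)`, `m ∈ M`, `φ ∈ C*`. -/
def coeffSpace {k C : Type} [CommRing k] [AddCommGroup C] [Module k C] [Coalgebra k C]
    (M : Submodule k C) : Submodule k C :=
  Submodule.span k {x | ∃ (φ : Module.Dual k C) (m : C), m ∈ M ∧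
    x = TensorProduct.lid k C (TensorProduct.map φ LinearMap.id (comul (R := k) m))}

/-- Any tensor `u ∈ V ⊗ W` can be written as `∑ bᵢ ⊗ cᵢ` with `bᵢ` a basis of `V` and the
`cᵢ` obtained from `u` by applying coordinate functionals. -/
private lemma rep_lemma {k V W : Type} [Field k] [AddCommGroup V] [Module k V]
    [AddCommGroup W] [Module k W] {ι : Type} (b : Module.Basis ι k V) (u : V ⊗[k] W) :
    ∃ s : Finset ι, ∀ s' : Finset ι, s ⊆ s' →
      u = ∑ i ∈ s', b i ⊗ₜ[k]
        (TensorProduct.lid k W (TensorProduct.map (b.coord i) LinearMap.id u)) := by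
  classical
  induction u using TensorProduct.induction_on with
  | zero => exact ⟨∅, fun s' _ => by simp⟩
  | tmul v w =>
    refine ⟨(b.repr v).support, fun s' hs' => ?_⟩
    have h1 : ∀ i : ι, (TensorProduct.lid k W)
        (TensorProduct.map (b.coord i) LinearMap.id (v ⊗ₜ[k] w)) = b.repr v i • w := by
      intro i; simp [Module.Basis.coord_apply]
    have hv : (∑ i ∈ s', b.repr v i • b i) = v := by
      rw [← Finset.sum_subset hs' (fun i _ hi => by
        rw [Finsupp.notMem_support_iff.mp hi, zero_smul])]
      conv_rhs => rw [← b.linearCombination_repr v]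
      rw [Finsupp.linearCombination_apply, Finsupp.sum]
    simp_rw [h1, tmul_smul, smul_tmul', ← TensorProduct.sum_tmul, hv]
  | add x y hx hy =>
    obtain ⟨s1, h1⟩ := hx
    obtain ⟨s2, h2⟩ := hy
    refine ⟨s1 ∪ s2, fun s' hs' => ?_⟩
    have e1 := h1 s' (Finset.union_subset_iff.mp hs').1
    have e2 := h2 s' (Finset.union_subset_iff.mp hs').2
    calc x + y = (∑ i ∈ s', b i ⊗ₜ[k]
            (TensorProduct.lid k W (TensorProduct.map (b.coord i) LinearMap.id x)))
          + ∑ i ∈ s', b i ⊗ₜ[k]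
            (TensorProduct.lid k W (TensorProduct.map (b.coord i) LinearMap.id y)) := by
          rw [← e1, ← e2]
      _ = _ := by
          rw [← Finset.sum_add_distrib]
          simp [map_add, tmul_add]

/-- Lemma 10: for a subcomodule `M` of a coalgebra `C` (i.e. `Δ(M) ⊆ M ⊗ C`), the coefficient
space `cf(M)` is the smallest subcoalgebra of `C` containing `M`, i.e. it equals the
subcoalgebra generated by `M`. -/
theorem stmt14 {k C : Type} [Field k] [AddCommGroup C] [Module k C] [Coalgebra k C]
    (M : Submodule k C)
    (hM : ∀ m ∈ M, comul (R := k) m ∈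
      LinearMap.range (TensorProduct.map M.subtype (LinearMap.id : C →ₗ[k] C))) :
    IsSubcoalgebra (coeffSpace M) ∧ M ≤ coeffSpace M ∧
      ∀ D : Submodule k C, IsSubcoalgebra D → M ≤ D → coeffSpace M ≤ D := by
  -- Key lemma B: Δ(M) ⊆ M ⊗ cf(M)
  have keyB : ∀ m ∈ M, comul (R := k) m ∈
      LinearMap.range (TensorProduct.map M.subtype (coeffSpace M).subtype) := by
    intro m hm
    obtain ⟨u, hu⟩ := hM m hm
    obtain ⟨g, hg⟩ := M.subtype.exists_leftInverse_of_injective M.ker_subtype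
    let b := Module.Basis.ofVectorSpace k M
    obtain ⟨s, hs⟩ := rep_lemma b u
    have hsu := hs s (subset_refl s)
    -- each coefficient lies in cf(M)
    have hc : ∀ i, (TensorProduct.lid k C)
        (TensorProduct.map (b.coord i) LinearMap.id u) ∈ coeffSpace M := by
      intro i
      apply Submodule.subset_span
      refine ⟨(b.coord i) ∘ₗ g, m, hm, ?_⟩
      rw [← hu, ← LinearMap.comp_apply (TensorProduct.map _ _),
        ← TensorProduct.map_comp]
      congr 2
      rw [LinearMap.comp_assoc, hg, LinearMap.comp_id, LinearMap.id_comp]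
    refine ⟨∑ i ∈ s, b i ⊗ₜ[k] (⟨_, hc i⟩ : coeffSpace M), ?_⟩
    rw [← hu]
    conv_rhs => rw [hsu]
    rw [map_sum, map_sum]
    exact Finset.sum_congr rfl fun i _ => rfl
  -- M ≤ cf(M)
  have hle : M ≤ coeffSpace M := by
    intro m hm
    apply Submodule.subset_span
    refine ⟨Coalgebra.counit, m, hm, ?_⟩
    have : TensorProduct.map Coalgebra.counit (LinearMap.id : C →ₗ[k] C)
        (comul (R := k) m) = Coalgebra.counit.rTensor C (comul m) := rfl
    rw [this, Coalgebra.rTensor_counit_comul]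
    simp
  refine ⟨?_, hle, ?_⟩
  · -- cf(M) is a subcoalgebra
    intro x hx
    refine Submodule.span_induction ?_ (by simp) (fun a b _ _ ha hb => by
        rw [map_add]; exact add_mem ha hb)
      (fun r a _ ha => by rw [map_smul]; exact Submodule.smul_mem _ r ha) hx
    rintro x ⟨φ, m, hm, rfl⟩
    obtain ⟨u, hu⟩ := keyB m hm
    -- the map M → cf(M), n ↦ (φ ⊗ id) Δ n
    let g1 : M →ₗ[k] coeffSpace M := LinearMap.codRestrict (coeffSpace M)
      ((TensorProduct.lid k C).toLinearMap ∘ₗ TensorProduct.map φ LinearMap.id ∘ₗ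
        comul ∘ₗ M.subtype)
      (fun n => Submodule.subset_span ⟨φ, n.1, n.2, rfl⟩)
    refine ⟨TensorProduct.map g1 LinearMap.id u, ?_⟩
    have haux : ∀ (t : C ⊗[k] C) (dd : C),
        (TensorProduct.lid k (C ⊗[k] C)) (TensorProduct.map φ LinearMap.id
          ((TensorProduct.assoc k C C C) (t ⊗ₜ[k] dd))) =
        ((TensorProduct.lid k C) (TensorProduct.map φ LinearMap.id t)) ⊗ₜ[k] dd := by
      intro t dd
      induction t using TensorProduct.induction_on with
      | zero => simp
      | tmul a c => simp [smul_tmul']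
      | add t1 t2 h1 h2 => simp only [add_tmul, map_add, h1, h2]
    -- pointwise identity
    have hQ : ∀ w : M ⊗[k] coeffSpace M,
        TensorProduct.map (coeffSpace M).subtype (coeffSpace M).subtype (TensorProduct.map g1 LinearMap.id w) =
        (TensorProduct.lid k (C ⊗[k] C)) (TensorProduct.map φ LinearMap.id
          ((TensorProduct.assoc k C C C)
            (TensorProduct.map (comul ∘ₗ M.subtype) (coeffSpace M).subtype w))) := by
      intro w
      induction w using TensorProduct.induction_on with
      | zero => simp
      | tmul n d =>
        simp only [TensorProduct.map_tmul, LinearMap.comp_apply, LinearMap.id_apply,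
          Submodule.coe_subtype, LinearMap.codRestrict_apply, LinearEquiv.coe_coe, g1]
        exact (haux _ _).symm
      | add w1 w2 h1 h2 => simp only [map_add, h1, h2]
    -- identity relating Δ ∘ (φ ⊗ id) with (φ ⊗ id ⊗ id) ∘ (id ⊗ Δ)
    have step1 : ∀ t : C ⊗[k] C,
        comul (R := k) ((TensorProduct.lid k C) (TensorProduct.map φ LinearMap.id t)) =
        (TensorProduct.lid k (C ⊗[k] C)) (TensorProduct.map φ LinearMap.id
          (comul.lTensor C t)) := by
      intro t
      induction t using TensorProduct.induction_on with
      | zero => simp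
      | tmul a c => simp
      | add t1 t2 h1 h2 => simp only [map_add, h1, h2]
    have step3 : comul.rTensor C (comul (R := k) m) =
        TensorProduct.map (comul ∘ₗ M.subtype) (coeffSpace M).subtype u := by
      rw [← hu]
      have : ∀ w : M ⊗[k] coeffSpace M, comul.rTensor C
          (TensorProduct.map M.subtype (coeffSpace M).subtype w) =
          TensorProduct.map (comul ∘ₗ M.subtype) (coeffSpace M).subtype w := by
        intro w
        induction w using TensorProduct.induction_on with
        | zero => simp
        | tmul n d => simp
        | add w1 w2 h1 h2 => simp only [map_add, h1, h2]
      exact this u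
    rw [hQ u, step1, ← Coalgebra.coassoc_apply, step3]
  · -- minimality
    intro D hD hMD
    rw [coeffSpace, Submodule.span_le]
    rintro x ⟨φ, m, hm, rfl⟩
    obtain ⟨t, ht⟩ := hD m (hMD hm)
    rw [← ht]
    have : ∀ t : D ⊗[k] D, (TensorProduct.lid k C) (TensorProduct.map φ LinearMap.id
        (TensorProduct.map D.subtype D.subtype t)) ∈ D := by
      intro t
      induction t using TensorProduct.induction_on with
      | zero => simp
      | tmul a c => simpa using D.smul_mem (φ a.1) c.2
      | add t1 t2 h1 h2 =>
        rw [map_add, map_add, map_add]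
        exact add_mem h1 h2
    exact this t
end

section
/- Let H be a Hopf algebra H = k⟨E,F,K⟩ type quantum sl₂ at an odd primitive ℓ-th root of unity ζ with K^ℓ = 1, and c_ζ = FE + (ζK + ζ^{−1}K^{−1})/(ζ−ζ^{−1})². Then for all s ≥ 1 (with [s]! ≠ 0, i.e. s < ℓ using divided powers), the identity F^{(s)}E^{(s)} = (1/[s]!²) ∏_{i=1}^{s} ( c_ζ − (ζ^{2i−1}K + ζ^{−2i+1}K^{−1})/(ζ−ζ^{−1})² ) holds, where F^{(s)} = F^s/[s]!, E^{(s)} = E^s/[s]!. -/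
/-- The quantum integer `[n] = (ζ^n - ζ^{-n})/(ζ - ζ^{-1})`. -/
noncomputable def qint {k : Type} [Field k] (ζ : k) (n : ℕ) : k :=
  (ζ ^ n - ζ⁻¹ ^ n) / (ζ - ζ⁻¹)

/-- The quantum factorial `[n]! = [1][2]⋯[n]`. -/
noncomputable def qfact {k : Type} [Field k] (ζ : k) (n : ℕ) : k :=
  ∏ i ∈ Finset.range n, qint ζ (i + 1)

private lemma aux_a {k : Type} [Field k] (ζ x : k) (hζ : ζ ≠ 0)
    (hδ : ζ ^ 2 - 1 ≠ 0) :
    ((ζ - ζ⁻¹) ^ 2)⁻¹ * ζ - ((ζ - ζ⁻¹) ^ 2)⁻¹ * x =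
      (ζ - ζ⁻¹)⁻¹ + ζ⁻¹ ^ 2 * (((ζ - ζ⁻¹) ^ 2)⁻¹ * ζ - ((ζ - ζ⁻¹) ^ 2)⁻¹ * (x * ζ ^ 2)) := by
  have h1 : ζ - ζ⁻¹ = (ζ ^ 2 - 1) / ζ := by field_simp
  rw [h1]
  field_simp
  ring

private lemma aux_b {k : Type} [Field k] (ζ x : k) (hζ : ζ ≠ 0)
    (hδ : ζ ^ 2 - 1 ≠ 0) :
    ((ζ - ζ⁻¹) ^ 2)⁻¹ * ζ⁻¹ - ((ζ - ζ⁻¹) ^ 2)⁻¹ * x⁻¹ =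
      -(ζ - ζ⁻¹)⁻¹ + ζ ^ 2 * (((ζ - ζ⁻¹) ^ 2)⁻¹ * ζ⁻¹ - ((ζ - ζ⁻¹) ^ 2)⁻¹ * (x⁻¹ * ζ⁻¹ ^ 2)) := by
  have hδ' : ζ⁻¹ ^ 2 - 1 ≠ 0 := by
    have h2 : ζ⁻¹ ^ 2 - 1 = (1 - ζ ^ 2) / ζ ^ 2 := by field_simp
    rw [h2]
    exact div_ne_zero (fun h => hδ (by linear_combination -h)) (pow_ne_zero 2 hζ)
  have h := aux_a ζ⁻¹ x⁻¹ (inv_ne_zero hζ) hδ'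
  simp only [inv_inv] at h
  have hsq : (ζ⁻¹ - ζ) ^ 2 = (ζ - ζ⁻¹) ^ 2 := by ring
  have hneg : (ζ⁻¹ - ζ)⁻¹ = -(ζ - ζ⁻¹)⁻¹ := by rw [← neg_sub, inv_neg]
  rw [hsq, hneg] at h
  exact h

/-- Formula (1-1): in quantum `sl₂` at an odd primitive `ℓ`-th root of unity `ζ` with
`K^ℓ = 1` (more generally in any algebra with elements satisfying those relations), for
`1 ≤ s < ℓ` with `[s]! ≠ 0`, the divided powers satisfy
`F^{(s)} E^{(s)} = (1/[s]!²) ∏_{i=1}^{s} (c_ζ - (ζ^{2i-1}K + ζ^{-(2i-1)}K^{-1})/(ζ-ζ^{-1})²)`,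
where `c_ζ = FE + (ζK + ζ^{-1}K^{-1})/(ζ-ζ^{-1})²`. -/
theorem stmt17 {k A : Type} [Field k] [CharZero k] [Ring A] [Algebra k A]
    (ℓ : ℕ) (hodd : Odd ℓ) (h3 : 3 ≤ ℓ) (ζ : k) (hζ : IsPrimitiveRoot ζ ℓ)
    (E F K K' : A) (hKK' : K * K' = 1) (hK'K : K' * K = 1)
    (hKE : K * E = (ζ ^ 2) • (E * K)) (hKF : K * F = (ζ⁻¹ ^ 2) • (F * K))
    (hEF : E * F - F * E = (ζ - ζ⁻¹)⁻¹ • (K - K'))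
    (hKl : K ^ ℓ = 1)
    (s : ℕ) (hs1 : 1 ≤ s) (hsl : s < ℓ) (hfact : qfact ζ s ≠ 0) :
    ((qfact ζ s)⁻¹ • F ^ s) * ((qfact ζ s)⁻¹ • E ^ s) =
      ((qfact ζ s) ^ 2)⁻¹ •
        ((List.range s).map (fun i =>
          (F * E + (((ζ - ζ⁻¹) ^ 2)⁻¹) • (ζ • K + ζ⁻¹ • K')) -
            (((ζ - ζ⁻¹) ^ 2)⁻¹) • ((ζ ^ (2 * i + 1)) • K + (ζ⁻¹ ^ (2 * i + 1)) • K'))).prod := by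
  have hζ0 : ζ ≠ 0 := hζ.ne_zero (by omega)
  have hδ : ζ ^ 2 - 1 ≠ 0 := by
    intro h
    have h2 : ℓ ∣ 2 := hζ.dvd_of_pow_eq_one 2 (by linear_combination h)
    have := Nat.le_of_dvd (by norm_num) h2
    omega
  set c : k := ((ζ - ζ⁻¹) ^ 2)⁻¹ with hc
  set a : ℕ → k := fun i => c * ζ - c * ζ ^ (2 * i + 1) with ha
  set b : ℕ → k := fun i => c * ζ⁻¹ - c * ζ⁻¹ ^ (2 * i + 1) with hb
  set T : ℕ → A := fun i => F * E + a i • K + b i • K' with hT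
  have hTeq : ∀ i : ℕ,
      (F * E + c • (ζ • K + ζ⁻¹ • K')) -
        c • ((ζ ^ (2 * i + 1)) • K + (ζ⁻¹ ^ (2 * i + 1)) • K') = T i := by
    intro i
    simp only [hT, ha, hb, smul_add, smul_smul, sub_smul]
    abel
  have hK'E : K' * E = (ζ ^ 2)⁻¹ • (E * K') := by
    have h1 : K' * (K * E) * K' = K' * ((ζ ^ 2) • (E * K)) * K' := by rw [hKE]
    rw [← mul_assoc, hK'K, one_mul] at h1
    rw [mul_smul_comm, smul_mul_assoc, mul_assoc, mul_assoc, hKK', mul_one] at h1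
    rw [h1, smul_smul, inv_mul_cancel₀ (pow_ne_zero 2 hζ0), one_smul]
  have hK'F : K' * F = (ζ ^ 2) • (F * K') := by
    have h1 : K' * (K * F) * K' = K' * ((ζ⁻¹ ^ 2) • (F * K)) * K' := by rw [hKF]
    rw [← mul_assoc, hK'K, one_mul] at h1
    rw [mul_smul_comm, smul_mul_assoc, mul_assoc, mul_assoc, hKK', mul_one] at h1
    rw [h1, smul_smul, ← mul_pow, mul_inv_cancel₀ hζ0, one_pow, one_smul]
  have hcomK : Commute K (F * E) := by
    show K * (F * E) = F * E * K
    rw [← mul_assoc, hKF, smul_mul_assoc, mul_assoc, hKE, mul_smul_comm, smul_smul,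
      ← mul_pow, inv_mul_cancel₀ hζ0, one_pow, one_smul, mul_assoc]
  have hcomK' : Commute K' (F * E) := by
    show K' * (F * E) = F * E * K'
    rw [← mul_assoc, hK'F, smul_mul_assoc, mul_assoc, hK'E, mul_smul_comm, smul_smul,
      mul_inv_cancel₀ (pow_ne_zero 2 hζ0), one_smul, mul_assoc]
  have hcomT : ∀ i, Commute (F * E) (T i) := by
    intro i
    show Commute (F * E) (F * E + a i • K + b i • K')
    exact ((Commute.refl _).add_right (hcomK.symm.smul_right _)).add_right
      (hcomK'.symm.smul_right _)
  have hEF' : E * F = F * E + (ζ - ζ⁻¹)⁻¹ • K - (ζ - ζ⁻¹)⁻¹ • K' := by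
    have h1 := hEF
    rw [sub_eq_iff_eq_add] at h1
    rw [h1, smul_sub]
    abel
  have hstep : ∀ i, F * T i = T (i + 1) * F := by
    intro i
    have hea : a i = (ζ - ζ⁻¹)⁻¹ + ζ⁻¹ ^ 2 * a (i + 1) := by
      simp only [ha, hc]
      rw [show 2 * (i + 1) + 1 = 2 * i + 1 + 2 from by ring, pow_add ζ (2 * i + 1) 2]
      exact aux_a ζ (ζ ^ (2 * i + 1)) hζ0 hδ
    have heb : b i = -(ζ - ζ⁻¹)⁻¹ + ζ ^ 2 * b (i + 1) := by
      simp only [hb, hc]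
      rw [show 2 * (i + 1) + 1 = 2 * i + 1 + 2 from by ring, pow_add ζ⁻¹ (2 * i + 1) 2,
        inv_pow ζ (2 * i + 1)]
      exact aux_b ζ (ζ ^ (2 * i + 1)) hζ0 hδ
    show F * (F * E + a i • K + b i • K') = (F * E + a (i + 1) • K + b (i + 1) • K') * F
    rw [mul_add, mul_add, add_mul, add_mul, mul_smul_comm, mul_smul_comm,
      smul_mul_assoc, smul_mul_assoc, hKF, hK'F, mul_assoc F E F, hEF']
    rw [hea, heb]
    simp only [smul_smul, mul_add, mul_sub, add_smul, sub_smul, neg_smul, smul_add, smul_sub,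
      mul_smul_comm]
    module
  have hshift : ∀ n : ℕ, F * ((List.range n).map T).prod =
      ((List.range n).map (fun i => T (i + 1))).prod * F := by
    intro n
    induction n with
    | zero => simp
    | succ n ih =>
        rw [List.range_succ, List.map_append, List.map_append, List.prod_append,
          List.prod_append, ← mul_assoc, ih]
        simp only [List.map_cons, List.map_nil, List.prod_cons, List.prod_nil, mul_one]
        rw [mul_assoc, hstep n, ← mul_assoc]
  have hmain : ∀ n : ℕ, F ^ n * E ^ n = ((List.range n).map T).prod := by
    intro n
    induction n with
    | zero => simp
    | succ n ih =>
        have hT0 : T 0 = F * E := by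
          show F * E + a 0 • K + b 0 • K' = F * E
          simp only [ha, hb]
          norm_num
        have e1 : F ^ (n + 1) * E ^ (n + 1) = F * ((F ^ n * E ^ n) * E) := by
          rw [pow_succ' F, pow_succ E, mul_assoc, ← mul_assoc (F ^ n)]
        rw [e1, ih, ← mul_assoc, hshift, mul_assoc, ← hT0]
        have hcomm : Commute (T 0) (((List.range n).map (fun i => T (i + 1))).prod) := by
          apply Commute.list_prod_right
          intro x hx
          simp only [List.mem_map] at hx
          obtain ⟨i, _, rfl⟩ := hx
          rw [hT0]
          exact hcomT (i + 1)
        rw [← hcomm.eq, List.range_succ_eq_map, List.map_cons, List.prod_cons, List.map_map]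
        rfl
  have hmap : (List.range s).map (fun i =>
      (F * E + c • (ζ • K + ζ⁻¹ • K')) -
        c • ((ζ ^ (2 * i + 1)) • K + (ζ⁻¹ ^ (2 * i + 1)) • K')) = (List.range s).map T :=
    List.map_congr_left (fun i _ => hTeq i)
  rw [smul_mul_assoc, mul_smul_comm, smul_smul, hmain, hmap, sq, mul_inv]
end
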